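/- arXiv:1209.3602 — 3 statements merged into one kernel-verified Lean document; each statement's English description precedes it below -/
import Mathlib

section
/- Let Ω ⊆ ℝ^N be a bounded (ε, r₀)-Reifenberg-flat domain with ε ≤ 20^{−N}. Then Ω has only finitely many connected components, and their number n satisfies n ≤ (20^N/ω_N)·|Ω|/r₀^N, where |Ω| is the Lebesgue measure of Ω and ω_N the Lebesgue measure of the unit ball in ℝ^N. -/
open Metric MeasureTheory Set Filter
open scoped ENNReal InnerProductSpace NNReal Topology

noncomputable section

/-- An `(ε, r₀)`-Reifenberg-flat domain in `ℝ^N`: a nonempty open set such that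
(i) at every boundary point and every scale `r ≤ r₀` the boundary is `ε r`-close in
Hausdorff distance to a hyperplane through the point, and (ii) at scale `r₀` the two
connected components of the complement of the `2 ε r₀`-neighborhood of the hyperplane
inside the ball lie in `Ω` and in `Ωᶜ` respectively. -/
def IsReifenbergFlat {N : ℕ} (ε r₀ : ℝ) (Ω : Set (EuclideanSpace ℝ (Fin N))) : Prop :=
  Ω.Nonempty ∧ IsOpen Ω ∧
    (∀ x ∈ frontier Ω, ∀ r : ℝ, 0 < r → r ≤ r₀ →
      ∃ ν : EuclideanSpace ℝ (Fin N), ‖ν‖ = 1 ∧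
        Metric.hausdorffDist (frontier Ω ∩ Metric.ball x r)
          ({y | ⟪ν, y - x⟫_ℝ = 0} ∩ Metric.ball x r) ≤ ε * r) ∧
    (∀ x ∈ frontier Ω,
      ∃ ν : EuclideanSpace ℝ (Fin N), ‖ν‖ = 1 ∧
        Metric.hausdorffDist (frontier Ω ∩ Metric.ball x r₀)
          ({y | ⟪ν, y - x⟫_ℝ = 0} ∩ Metric.ball x r₀) ≤ ε * r₀ ∧
        {y | 2 * ε * r₀ ≤ ⟪ν, y - x⟫_ℝ} ∩ Metric.ball x r₀ ⊆ Ω ∧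
        {y | ⟪ν, y - x⟫_ℝ ≤ -(2 * ε * r₀)} ∩ Metric.ball x r₀ ⊆ Ωᶜ)

/-!
Every connected component of `Ω` contains a ball of radius `r₀ / 20`; the components are disjoint
and `Ω` has finite measure, so there are at most `|Ω| / (ω_N (r₀ / 20)^N)` of them.

To find the ball, let `y ∈ Ω` be at distance `d < r₀ / 20` from `Ωᶜ`, attained at `z ∈ ∂Ω`, and
use flatness at `z` at the scale `r = min r₀ (d / (4ε))`. All of `∂Ω ∩ B(z, r)` lies in the slab
`|⟪ν, w - z⟫| ≤ ε r`, while `y` lies outside it, because the hyperplane is `ε r`-close to `∂Ω` and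
`d > 2 ε r`. The open half-ball on the side of `y` is convex and misses `∂Ω`, so it lies in the
component of `y`; it contains the ball `B(z + (r/2) ν, r/4)`, and `r / 4 ≥ min (r₀/20) (5d/4)`
since `ε ≤ 1/20`. Iterating, the distance to `Ωᶜ` grows by a factor `5/4` in the same component
until it reaches `r₀ / 20`.
-/

namespace Metric

variable {X : Type*} [PseudoMetricSpace X]

theorem hausdorffEDist_inter_ball_ne_top {s t : Set X} {z : X}
    {r : ℝ} (hs : (s ∩ ball z r).Nonempty) (ht : (t ∩ ball z r).Nonempty) :
    hausdorffEDist (s ∩ ball z r) (t ∩ ball z r) ≠ ⊤ :=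
  hausdorffEDist_ne_top_of_nonempty_of_bounded hs ht (isBounded_ball.subset inter_subset_right)
    (isBounded_ball.subset inter_subset_right)

theorem le_infDist_compl_of_ball_subset {s : Set X} {x : X}
    {ρ : ℝ} (hne : sᶜ.Nonempty) (h : ball x ρ ⊆ s) : ρ ≤ infDist x sᶜ :=
  (le_infDist hne).2 fun _ hw => not_lt.1 fun hlt => hw (h (mem_ball'.2 hlt))

theorem infDist_compl_pos {s : Set X} (hs : IsOpen s)
    (hne : sᶜ.Nonempty) {x : X} (hx : x ∈ s) : 0 < infDist x sᶜ :=
  (hs.isClosed_compl.notMem_iff_infDist_pos hne).1 (not_not.2 hx)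

theorem mem_frontier_of_dist_eq_infDist {E : Type*} [NormedAddCommGroup E] [NormedSpace ℝ E]
    {Ω : Set E} (hΩ : IsOpen Ω) {y z : E} (hy : y ∈ Ω)
    (hz : z ∈ Ωᶜ) (hyz : dist y z = infDist y Ωᶜ) : z ∈ frontier Ω := by
  have hd : infDist y Ωᶜ ≠ 0 := by
    rw [← hyz]; exact dist_ne_zero.2 fun h => hz (h ▸ hy)
  have hzcl : z ∈ closure (ball y (infDist y Ωᶜ)) := by
    rw [closure_ball y hd, mem_closedBall, dist_comm, hyz]
  rw [frontier, hΩ.interior_eq]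
  exact ⟨closure_mono ball_infDist_compl_subset hzcl, hz⟩

end Metric

section InnerProduct

variable {E : Type*} [NormedAddCommGroup E] [InnerProductSpace ℝ E]

theorem abs_inner_sub_le_infDist {ν z : E} {s : Set E} (hν : ‖ν‖ = 1)
    (hs : s ⊆ {y | ⟪ν, y - z⟫_ℝ = 0}) (hne : s.Nonempty) (w : E) :
    |⟪ν, w - z⟫_ℝ| ≤ infDist w s := by
  refine (le_infDist hne).2 fun p hp => ?_
  have hpz : ⟪ν, p - z⟫_ℝ = 0 := hs hp
  calc |⟪ν, w - z⟫_ℝ| = |⟪ν, w - p⟫_ℝ| := by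
        rw [← sub_sub_sub_cancel_right w p z, inner_sub_right (y := w - z), hpz, sub_zero]
    _ ≤ ‖ν‖ * ‖w - p‖ := abs_real_inner_le_norm _ _
    _ = dist w p := by rw [hν, one_mul, dist_eq_norm]

theorem norm_sub_inner_smul_le {ν : E} (hν : ‖ν‖ = 1) (v : E) :
    ‖v - ⟪ν, v⟫_ℝ • ν‖ ≤ ‖v‖ := by
  refine sq_le_sq₀ (norm_nonneg _) (norm_nonneg _) |>.1 ?_
  rw [norm_sub_sq_real, norm_smul, real_inner_smul_right, hν, real_inner_comm,
    Real.norm_eq_abs]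
  nlinarith [sq_abs ⟪v, ν⟫_ℝ]

theorem convex_setOf_lt_inner_sub (a : ℝ) (ν z : E) : Convex ℝ {w | a < ⟪ν, w - z⟫_ℝ} := by
  simp only [inner_sub_right, lt_sub_iff_add_lt]
  exact convex_halfSpace_gt (innerₛₗ ℝ ν).isLinear _

end InnerProduct

theorem exists_le_of_forall_exists_mul_le {α : Type*} {f : α → ℝ} {U : Set α} {a q : ℝ}
    (hq : 1 < q) (hstep : ∀ y ∈ U, f y < a → ∃ y' ∈ U, min a (q * f y) ≤ f y') {x : α}
    (hx : x ∈ U) (hfx : 0 < f x) : ∃ y ∈ U, a ≤ f y := by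
  have hiter : ∀ k : ℕ, ∃ y ∈ U, min a (q ^ k * f x) ≤ f y := by
    intro k
    induction k with
    | zero => exact ⟨x, hx, by simp⟩
    | succ k ih =>
      obtain ⟨y, hy, hfy⟩ := ih
      rcases le_or_gt a (f y) with hay | hya
      · exact ⟨y, hy, (min_le_left _ _).trans hay⟩
      obtain ⟨y', hy', hfy'⟩ := hstep y hy hya
      have hky : q ^ k * f x ≤ f y := (min_le_iff.1 hfy).resolve_left hya.not_ge
      refine ⟨y', hy', le_trans (min_le_min_left _ ?_) hfy'⟩
      rw [pow_succ', mul_assoc]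
      gcongr
  obtain ⟨k, hk⟩ := pow_unbounded_of_one_lt (a / f x) hq
  obtain ⟨y, hy, hfy⟩ := hiter k
  rw [div_lt_iff₀ hfx] at hk
  exact ⟨y, hy, by rwa [min_eq_left hk.le] at hfy⟩

theorem MeasureTheory.Measure.finite_and_ncard_mul_le {α : Type*} [MeasurableSpace α]
    (μ : Measure α) {𝒞 : Set (Set α)} {Ω : Set α} {v : ℝ≥0∞} (hv : 0 < v) (hΩ : μ Ω ≠ ∞)
    (hmeas : ∀ U ∈ 𝒞, MeasurableSet U) (hsub : ∀ U ∈ 𝒞, U ⊆ Ω) (hdisj : 𝒞.PairwiseDisjoint id)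
    (hle : ∀ U ∈ 𝒞, v ≤ μ U) : 𝒞.Finite ∧ 𝒞.ncard * v ≤ μ Ω := by
  have hfin : 𝒞.Finite := by
    have := μ.finite_const_le_meas_of_disjoint_iUnion hv (As := ((↑) : 𝒞 → Set α))
      (fun U => hmeas U U.2) (fun U V hUV => hdisj U.2 V.2 (Subtype.coe_ne_coe.2 hUV))
      (ne_top_of_le_ne_top hΩ (measure_mono (iUnion_subset fun U => hsub U U.2)))
    rw [show {U : 𝒞 | v ≤ μ U} = univ from eq_univ_of_forall fun U => hle U U.2] at this
    exact Set.finite_coe_iff.1 (Set.finite_univ_iff.1 this)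
  refine ⟨hfin, ?_⟩
  rw [ncard_eq_toFinset_card _ hfin, ← nsmul_eq_mul, ← Finset.sum_const]
  calc ∑ _ ∈ hfin.toFinset, v ≤ ∑ U ∈ hfin.toFinset, μ U :=
        Finset.sum_le_sum fun U hU => hle U (hfin.mem_toFinset.1 hU)
    _ = μ (⋃ U ∈ hfin.toFinset, U) := (measure_biUnion_finset
        (hdisj.subset (by simp)) fun U hU => hmeas U (hfin.mem_toFinset.1 hU)).symm
    _ ≤ μ Ω := measure_mono (iUnion₂_subset fun U hU => hsub U (hfin.mem_toFinset.1 hU))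

theorem natCast_mul_volume_ball_le {N n : ℕ} {ρ : ℝ} (hρ : 0 < ρ)
    {Ω : Set (EuclideanSpace ℝ (Fin N))} (hΩ : volume Ω ≠ ∞)
    (h : n * volume (ball (0 : EuclideanSpace ℝ (Fin N)) ρ) ≤ volume Ω) :
    (n : ℝ) * (ρ ^ N * (volume (ball (0 : EuclideanSpace ℝ (Fin N)) 1)).toReal) ≤
      (volume Ω).toReal := by
  have := ENNReal.toReal_mono hΩ h
  rwa [Measure.addHaar_ball_of_pos _ _ hρ, finrank_euclideanSpace_fin, ENNReal.toReal_mul,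
    ENNReal.toReal_mul, ENNReal.toReal_ofReal (by positivity), ENNReal.toReal_natCast] at this

theorem pairwiseDisjoint_connectedComponentIn {X : Type*} [TopologicalSpace X] (F : Set X) :
    {U | ∃ x ∈ F, U = connectedComponentIn F x}.PairwiseDisjoint id := by
  rintro _ ⟨x, -, rfl⟩ _ ⟨y, -, rfl⟩ hxy
  refine disjoint_left.2 fun w hwx hwy => hxy ?_
  rw [connectedComponentIn_eq hwx, connectedComponentIn_eq hwy]

namespace Reifenberg

variable {E : Type*} [NormedAddCommGroup E] [InnerProductSpace ℝ E]

def FlatBoundary (ε r₀ : ℝ) (Ω : Set E) : Prop :=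
  ∀ x ∈ frontier Ω, ∀ r : ℝ, 0 < r → r ≤ r₀ →
    ∃ ν : E, ‖ν‖ = 1 ∧
      hausdorffDist (frontier Ω ∩ ball x r) ({y | ⟪ν, y - x⟫_ℝ = 0} ∩ ball x r) ≤ ε * r

theorem _root_.IsReifenbergFlat.flatBoundary {N : ℕ} {ε r₀ : ℝ}
    {Ω : Set (EuclideanSpace ℝ (Fin N))} (hΩ : IsReifenbergFlat ε r₀ Ω) :
    FlatBoundary ε r₀ Ω :=
  hΩ.2.2.1

section FlatBall

variable {ε r : ℝ} {Ω : Set E} {z ν : E}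

theorem abs_inner_sub_le_of_mem_frontier (hr : 0 < r) (hν : ‖ν‖ = 1) (hz : z ∈ frontier Ω)
    (hH : hausdorffDist (frontier Ω ∩ ball z r) ({y | ⟪ν, y - z⟫_ℝ = 0} ∩ ball z r) ≤ ε * r) :
    ∀ w ∈ frontier Ω ∩ ball z r, |⟪ν, w - z⟫_ℝ| ≤ ε * r := by
  intro w hw
  have hzP : z ∈ {y | ⟪ν, y - z⟫_ℝ = 0} ∩ ball z r := ⟨by simp, mem_ball_self hr⟩
  calc |⟪ν, w - z⟫_ℝ| ≤ infDist w ({y | ⟪ν, y - z⟫_ℝ = 0} ∩ ball z r) :=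
        abs_inner_sub_le_infDist hν inter_subset_left ⟨z, hzP⟩ w
    _ ≤ ε * r := (infDist_le_hausdorffDist_of_mem hw <|
        hausdorffEDist_inter_ball_ne_top ⟨z, hz, hzP.2⟩ ⟨z, hzP⟩).trans hH

theorem infDist_compl_le_abs_inner_add (hΩ : IsOpen Ω) (hr : 0 < r) (hν : ‖ν‖ = 1)
    (hz : z ∈ frontier Ω)
    (hH : hausdorffDist (frontier Ω ∩ ball z r) ({y | ⟪ν, y - z⟫_ℝ = 0} ∩ ball z r) ≤ ε * r)
    {y : E} (hy : y ∈ ball z r) : infDist y Ωᶜ ≤ |⟪ν, y - z⟫_ℝ| + ε * r := by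
  set s := ⟪ν, y - z⟫_ℝ
  set p := y - s • ν
  have hpz : p - z = (y - z) - s • ν := sub_right_comm _ _ _
  have hpP : p ∈ {y | ⟪ν, y - z⟫_ℝ = 0} ∩ ball z r := by
    refine ⟨?_, ?_⟩
    · rw [mem_ofPred_eq, hpz, inner_sub_right, real_inner_smul_right, real_inner_self_eq_norm_sq,
        hν]
      ring
    · rw [mem_ball, dist_eq_norm, hpz]
      exact (norm_sub_inner_smul_le hν _).trans_lt (mem_ball_iff_norm.1 hy)
  have hzF : z ∈ frontier Ω ∩ ball z r := ⟨hz, mem_ball_self hr⟩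
  have hFΩ : frontier Ω ∩ ball z r ⊆ Ωᶜ := fun w hw hwΩ =>
    (hΩ.frontier_eq ▸ hw.1).2 hwΩ
  calc infDist y Ωᶜ ≤ infDist p Ωᶜ + dist y p := infDist_le_infDist_add_dist
    _ ≤ infDist p (frontier Ω ∩ ball z r) + |s| := by
        gcongr
        · exact infDist_le_infDist_of_subset hFΩ ⟨z, hzF⟩
        · rw [dist_eq_norm, sub_sub_cancel, norm_smul, hν, mul_one, Real.norm_eq_abs]
    _ ≤ ε * r + |s| := by
        gcongr
        rw [hausdorffDist_comm] at hH
        exact (infDist_le_hausdorffDist_of_mem hpP <|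
          hausdorffEDist_inter_ball_ne_top ⟨p, hpP⟩ ⟨z, hzF⟩).trans hH
    _ = |s| + ε * r := add_comm _ _

theorem ball_subset_setOf_lt_inner_sub (hr : 0 < r) (hν : ‖ν‖ = 1) :
    ball (z + (r / 2) • ν) (r / 4) ⊆ {w | r / 4 < ⟪ν, w - z⟫_ℝ} ∩ ball z r := by
  intro w hw
  have hwc : ‖w - (z + (r / 2) • ν)‖ < r / 4 := mem_ball_iff_norm.1 hw
  have hwz : w - z = (w - (z + (r / 2) • ν)) + (r / 2) • ν := by abel
  refine ⟨?_, ?_⟩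
  · have := abs_real_inner_le_norm ν (w - (z + (r / 2) • ν))
    rw [hν, one_mul] at this
    rw [mem_ofPred_eq, hwz, inner_add_right, real_inner_smul_right, real_inner_self_eq_norm_sq, hν]
    linarith [neg_abs_le ⟪ν, w - (z + (r / 2) • ν)⟫_ℝ]
  · rw [mem_ball_iff_norm, hwz]
    calc _ ≤ ‖w - (z + (r / 2) • ν)‖ + ‖(r / 2) • ν‖ := norm_add_le _ _
      _ < r := by rw [norm_smul, hν, Real.norm_of_nonneg (by positivity)]; linarith

theorem ball_subset_connectedComponentIn_of_slab (hΩ : IsOpen Ω) (hε : ε ≤ 1 / 4) (hr : 0 < r)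
    (hν : ‖ν‖ = 1) (hslab : ∀ w ∈ frontier Ω ∩ ball z r, |⟪ν, w - z⟫_ℝ| ≤ ε * r)
    {y : E} (hy : y ∈ Ω) (hyz : y ∈ ball z r) (hys : ε * r < ⟪ν, y - z⟫_ℝ) :
    ball (z + (r / 2) • ν) (r / 4) ⊆ connectedComponentIn Ω y := by
  set S := {w | ε * r < ⟪ν, w - z⟫_ℝ} ∩ ball z r
  have hS : IsPreconnected S :=
    ((convex_setOf_lt_inner_sub _ ν z).inter (convex_ball z r)).isPreconnected
  have hSΩ : S ⊆ Ω := by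
    refine hS.subset_of_closure_inter_subset hΩ ⟨y, ⟨hys, hyz⟩, hy⟩ fun w ⟨hwcl, hwS⟩ => ?_
    by_contra hwΩ
    have hwF : w ∈ frontier Ω := ⟨hwcl, hΩ.interior_eq.symm ▸ hwΩ⟩
    exact (hwS.1.trans_le ((le_abs_self _).trans (hslab w ⟨hwF, hwS.2⟩))).false
  calc ball (z + (r / 2) • ν) (r / 4) ⊆ {w | r / 4 < ⟪ν, w - z⟫_ℝ} ∩ ball z r :=
        ball_subset_setOf_lt_inner_sub hr hν
    _ ⊆ S := inter_subset_inter_left _ fun w (hw : r / 4 < _) =>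
        (show ε * r < ⟪ν, w - z⟫_ℝ by nlinarith)
    _ ⊆ connectedComponentIn Ω y := hS.subset_connectedComponentIn ⟨hys, hyz⟩ hSΩ

theorem exists_mem_connectedComponentIn_div_four_le_infDist (hΩ : IsOpen Ω) (hε : ε ≤ 1 / 4) (hr : 0 < r) (hν : ‖ν‖ = 1)
    (hz : z ∈ frontier Ω)
    (hH : hausdorffDist (frontier Ω ∩ ball z r) ({y | ⟪ν, y - z⟫_ℝ = 0} ∩ ball z r) ≤ ε * r)
    {y : E} (hy : y ∈ Ω) (hyz : dist y z = infDist y Ωᶜ) (hd : 2 * (ε * r) < infDist y Ωᶜ)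
    (hdr : infDist y Ωᶜ < r) :
    ∃ c ∈ connectedComponentIn Ω y, r / 4 ≤ infDist c Ωᶜ := by
  have hyball : y ∈ ball z r := by rwa [mem_ball, hyz]
  have hslab := abs_inner_sub_le_of_mem_frontier hr hν hz hH
  have hys : ε * r < |⟪ν, y - z⟫_ℝ| := by
    linarith [infDist_compl_le_abs_inner_add hΩ hr hν hz hH hyball]
  obtain ⟨σ, hσ, hslabσ, hyσ⟩ : ∃ σ : E, ‖σ‖ = 1 ∧
      (∀ w ∈ frontier Ω ∩ ball z r, |⟪σ, w - z⟫_ℝ| ≤ ε * r) ∧ ε * r < ⟪σ, y - z⟫_ℝ := by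
    rcases lt_abs.1 hys with h | h
    · exact ⟨ν, hν, hslab, h⟩
    · refine ⟨-ν, by rwa [norm_neg], fun w hw => ?_, by rwa [inner_neg_left]⟩
      rw [inner_neg_left, abs_neg]
      exact hslab w hw
  have hball := ball_subset_connectedComponentIn_of_slab hΩ hε hr hσ hslabσ hy hyball hyσ
  refine ⟨z + (r / 2) • σ, hball (mem_ball_self (by positivity)), ?_⟩
  exact le_infDist_compl_of_ball_subset ⟨z, hΩ.frontier_eq ▸ hz |>.2⟩
    (hball.trans (connectedComponentIn_subset _ _))

end FlatBall

theorem exists_mem_connectedComponentIn_le_infDist [ProperSpace E] {ε r₀ : ℝ} (hε : 0 < ε)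
    (hε20 : ε ≤ 1 / 20) {Ω : Set E} (hΩ : IsOpen Ω) (hflat : FlatBoundary ε r₀ Ω) {y : E}
    (hy : y ∈ Ω) (hne : Ωᶜ.Nonempty) (hdr₀ : infDist y Ωᶜ < r₀ / 20) :
    ∃ y' ∈ connectedComponentIn Ω y, min (r₀ / 20) (5 / 4 * infDist y Ωᶜ) ≤ infDist y' Ωᶜ := by
  set d := infDist y Ωᶜ
  have hd : 0 < d := infDist_compl_pos hΩ hne hy
  obtain ⟨z, hzc, hdz⟩ := hΩ.isClosed_compl.exists_infDist_eq_dist hne y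
  have hz := mem_frontier_of_dist_eq_infDist hΩ hy hzc hdz.symm
  set r := min r₀ (d / (4 * ε))
  have hr : 0 < r := lt_min (by linarith) (by positivity)
  have hεr : ε * r ≤ d / 4 := by
    calc ε * r ≤ ε * (d / (4 * ε)) := by gcongr; exact min_le_right _ _
      _ = d / 4 := by field_simp
  have hdr : d < r := lt_min (by linarith) (by rw [lt_div_iff₀ (by positivity)]; nlinarith)
  obtain ⟨ν, hν, hH⟩ := hflat z hz r hr (min_le_left _ _)
  obtain ⟨c, hc, hrc⟩ :=
    exists_mem_connectedComponentIn_div_four_le_infDist hΩ (by linarith) hr hν hz hH hy hdz.symm (by linarith) hdr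
  refine ⟨c, hc, le_trans ?_ hrc⟩
  rw [le_div_iff₀ (by norm_num)]
  refine le_min ?_ ?_
  · linarith [min_le_left (r₀ / 20) (5 / 4 * d)]
  · rw [le_div_iff₀ (by positivity)]
    nlinarith [min_le_right (r₀ / 20) (5 / 4 * d)]

theorem exists_ball_subset_connectedComponentIn [ProperSpace E] {ε r₀ : ℝ} (hε : 0 < ε)
    (hε20 : ε ≤ 1 / 20) {Ω : Set E} (hΩ : IsOpen Ω) (hflat : FlatBoundary ε r₀ Ω) {x : E}
    (hx : x ∈ Ω) : ∃ c, ball c (r₀ / 20) ⊆ connectedComponentIn Ω x := by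
  rcases Ωᶜ.eq_empty_or_nonempty with hemp | hne
  · rw [compl_empty_iff.1 hemp, connectedComponentIn_univ,
      PreconnectedSpace.connectedComponent_eq_univ]
    exact ⟨x, subset_univ _⟩
  have hstep : ∀ y ∈ connectedComponentIn Ω x, infDist y Ωᶜ < r₀ / 20 →
      ∃ y' ∈ connectedComponentIn Ω x, min (r₀ / 20) (5 / 4 * infDist y Ωᶜ) ≤ infDist y' Ωᶜ := by
    intro y hy hyr
    rw [connectedComponentIn_eq hy]
    exact exists_mem_connectedComponentIn_le_infDist hε hε20 hΩ hflat
      (connectedComponentIn_subset _ _ hy) hne hyr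
  obtain ⟨c, hc, hrc⟩ := exists_le_of_forall_exists_mul_le (by norm_num) hstep
    (mem_connectedComponentIn hx) (infDist_compl_pos hΩ hne hx)
  refine ⟨c, (ball_subset_ball hrc).trans ?_⟩
  rw [connectedComponentIn_eq hc]
  exact (convex_ball c _).isPreconnected.subset_connectedComponentIn
    (mem_ball_self (infDist_compl_pos hΩ hne (connectedComponentIn_subset _ _ hc)))
    ball_infDist_compl_subset

end Reifenberg

theorem IsReifenbergFlat.exists_ball_subset_connectedComponentIn {N : ℕ} {ε r₀ : ℝ}
    {Ω : Set (EuclideanSpace ℝ (Fin N))} (hΩ : IsReifenbergFlat ε r₀ Ω) (hε : 0 < ε)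
    (hε' : ε ≤ 1 / 20 ^ N) {x : EuclideanSpace ℝ (Fin N)} (hx : x ∈ Ω) :
    ∃ c, ball c (r₀ / 20) ⊆ connectedComponentIn Ω x := by
  rcases N.eq_zero_or_pos with rfl | hN
  · exact ⟨x, fun w _ => Subsingleton.elim x w ▸ mem_connectedComponentIn hx⟩
  have hε20 : ε ≤ 1 / 20 :=
    hε'.trans (one_div_le_one_div_of_le (by norm_num) (le_self_pow₀ (by norm_num) hN.ne'))
  exact Reifenberg.exists_ball_subset_connectedComponentIn hε hε20 hΩ.2.1 hΩ.flatBoundary hx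

theorem finitely_many_components_general {N : ℕ} {ε r₀ : ℝ}
    (hε : 0 < ε) (hε' : ε ≤ 1 / 20 ^ N) (hr₀ : 0 < r₀)
    {Ω : Set (EuclideanSpace ℝ (Fin N))} (hΩ : IsReifenbergFlat ε r₀ Ω)
    (hbdd : Bornology.IsBounded Ω) :
    Set.Finite {U : Set (EuclideanSpace ℝ (Fin N)) | ∃ x ∈ Ω, U = connectedComponentIn Ω x} ∧
    (Set.ncard {U : Set (EuclideanSpace ℝ (Fin N)) | ∃ x ∈ Ω, U = connectedComponentIn Ω x} : ℝ) ≤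
      (20 : ℝ) ^ N / (volume (Metric.ball (0 : EuclideanSpace ℝ (Fin N)) 1)).toReal *
        ((volume Ω).toReal / r₀ ^ N) := by
  obtain ⟨hfin, hcard⟩ := volume.finite_and_ncard_mul_le
    (measure_ball_pos _ (0 : EuclideanSpace ℝ (Fin N)) (by positivity : 0 < r₀ / 20))
    hbdd.measure_lt_top.ne
    (by rintro _ ⟨x, -, rfl⟩; exact hΩ.2.1.connectedComponentIn.measurableSet)
    (by rintro _ ⟨x, -, rfl⟩; exact connectedComponentIn_subset _ _)
    (pairwiseDisjoint_connectedComponentIn Ω)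
    (by
      rintro _ ⟨x, hx, rfl⟩
      obtain ⟨c, hc⟩ := hΩ.exists_ball_subset_connectedComponentIn hε hε' hx
      rw [← Measure.addHaar_ball_center volume c]
      exact measure_mono hc)
  refine ⟨hfin, ?_⟩
  have hcardℝ := natCast_mul_volume_ball_le (by positivity) hbdd.measure_lt_top.ne hcard
  have hω : 0 < (volume (ball (0 : EuclideanSpace ℝ (Fin N)) 1)).toReal :=
    ENNReal.toReal_pos (measure_ball_pos _ _ one_pos).ne' measure_ball_lt_top.ne
  rw [div_mul_div_comm, le_div_iff₀ (by positivity)]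
  convert mul_le_mul_of_nonneg_left hcardℝ (by positivity : (0 : ℝ) ≤ 20 ^ N) using 1
  rw [div_pow]
  field_simp

/-- **Proposition (finitely many connected components, with a quantitative bound).**
Let `Ω ⊆ ℝ^N` be a bounded `(ε, r₀)`-Reifenberg-flat domain with `ε ≤ 20^{-N}`. Then
the family of connected components of `Ω` is finite and its cardinality `n` satisfies
`n ≤ (20^N / ω_N) * |Ω| / r₀^N`, where `ω_N` is the volume of the unit ball. -/
theorem finitely_many_components {N : ℕ} {ε r₀ : ℝ}
    (hε : 0 < ε) (hε2 : ε < 1 / 2) (hε' : ε ≤ 1 / 20 ^ N) (hr₀ : 0 < r₀)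
    {Ω : Set (EuclideanSpace ℝ (Fin N))} (hΩ : IsReifenbergFlat ε r₀ Ω)
    (hbdd : Bornology.IsBounded Ω) :
    Set.Finite {U : Set (EuclideanSpace ℝ (Fin N)) | ∃ x ∈ Ω, U = connectedComponentIn Ω x} ∧
    (Set.ncard {U : Set (EuclideanSpace ℝ (Fin N)) | ∃ x ∈ Ω, U = connectedComponentIn Ω x} : ℝ) ≤
      (20 : ℝ) ^ N / (volume (Metric.ball (0 : EuclideanSpace ℝ (Fin N)) 1)).toReal *
        ((volume Ω).toReal / r₀ ^ N) :=
  finitely_many_components_general hε hε' hr₀ hΩ hbdd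
end
end

section
/- Let Ω ⊆ ℝ^N be a bounded (ε, r₀)-Reifenberg-flat domain with ε ≤ 20^{−N}, and let U_i and U_j be two distinct connected components of Ω. Then for every z ∈ ∂U_i one has d(z, U_j) > r₀/70. -/
/-!
Let `z ∈ ∂U_i ⊆ ∂Ω` and let `ν` be the normal given by condition (ii) at `z`. Every `w ∈ Ω` with
`|w - z| < r₀ / 4` lies in the component of `Ω` containing `z + (r₀ / 2) ν`. Indeed, push `w` away
from a nearest boundary point `x` to `x + 3 (w - x)`: flatness at scale `6 d(w)`, where
`d(w) = dist(w, ∂Ω)`, keeps the segment inside `Ω` and multiplies `d(w)` by at least `9 / 5`, so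
the displacements form a geometric series and `w` stays in `B(z, r₀)`. Once `d(w) ≥ 3 ε r₀`, the
point `w` lies in the convex upper half-ball `{⟪ν, y - z⟫ ≥ 2 ε r₀} ∩ B(z, r₀) ⊆ Ω`, which contains
`z + (r₀ / 2) ν`. Hence `U_i` and `U_j` cannot both come within `r₀ / 4` of `z`.
-/

open Metric MeasureTheory Set Filter
open scoped ENNReal InnerProductSpace NNReal Topology

noncomputable section

lemma IsPreconnected.subset_of_disjoint_frontier {α : Type*} [TopologicalSpace α]
    {S Ω : Set α} (hS : IsPreconnected S) (hΩ : IsOpen Ω) (hSΩ : (S ∩ Ω).Nonempty)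
    (hSF : Disjoint S (frontier Ω)) : S ⊆ Ω :=
  hS.subset_of_closure_inter_subset hΩ hSΩ fun p ⟨hpc, hpS⟩ => by
    by_contra hpΩ
    exact hSF.notMem_of_mem_left hpS (by rw [hΩ.frontier_eq]; exact ⟨hpc, hpΩ⟩)

lemma IsOpen.frontier_connectedComponentIn_subset {α : Type*} [TopologicalSpace α]
    [LocallyConnectedSpace α] {Ω : Set α} (hΩ : IsOpen Ω) (x : α) :
    frontier (connectedComponentIn Ω x) ⊆ frontier Ω := by
  intro z hz
  rw [hΩ.connectedComponentIn.frontier_eq] at hz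
  rw [hΩ.frontier_eq]
  refine ⟨closure_mono (connectedComponentIn_subset Ω x) hz.1, fun hzΩ => hz.2 ?_⟩
  obtain ⟨p, hpz, hpx⟩ := _root_.mem_closure_iff.1 hz.1 _ hΩ.connectedComponentIn
    (mem_connectedComponentIn hzΩ)
  rw [connectedComponentIn_eq hpx, ← connectedComponentIn_eq hpz]
  exact mem_connectedComponentIn hzΩ

section InnerProductSpace

variable {E : Type*} [NormedAddCommGroup E] [InnerProductSpace ℝ E]

def IsFlatAt (F : Set E) (x ν : E) (r δ : ℝ) : Prop :=
  hausdorffDist (F ∩ ball x r) ({y | ⟪ν, y - x⟫_ℝ = 0} ∩ ball x r) ≤ δ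

lemma abs_inner_sub_inner_le_dist {ν : E} (hν : ‖ν‖ = 1) (a b c : E) :
    |⟪ν, a - c⟫_ℝ - ⟪ν, b - c⟫_ℝ| ≤ dist a b := by
  rw [← inner_sub_right, sub_sub_sub_cancel_right, dist_eq_norm]
  simpa [hν] using abs_real_inner_le_norm ν (a - b)

variable {F : Set E} {x ν : E} {r δ : ℝ}

lemma hausdorffEDist_inter_ball_ne_top (hr : 0 < r) (hx : x ∈ F) :
    hausdorffEDist (F ∩ ball x r) ({y | ⟪ν, y - x⟫_ℝ = 0} ∩ ball x r) ≠ ⊤ :=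
  hausdorffEDist_ne_top_of_nonempty_of_bounded ⟨x, hx, mem_ball_self hr⟩
    ⟨x, by simp, mem_ball_self hr⟩ (isBounded_ball.subset inter_subset_right)
    (isBounded_ball.subset inter_subset_right)

namespace IsFlatAt

lemma neg (h : IsFlatAt F x ν r δ) : IsFlatAt F x (-ν) r δ := by
  simpa only [IsFlatAt, inner_neg_left, neg_eq_zero] using h

lemma abs_inner_le (h : IsFlatAt F x ν r δ) (hν : ‖ν‖ = 1) (hr : 0 < r) (hx : x ∈ F)
    {y : E} (hy : y ∈ F) (hyx : dist y x < r) : |⟪ν, y - x⟫_ℝ| ≤ δ := by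
  have hne : ({y | ⟪ν, y - x⟫_ℝ = 0} ∩ ball x r).Nonempty := ⟨x, by simp, mem_ball_self hr⟩
  have hplane : |⟪ν, y - x⟫_ℝ| ≤ infDist y ({y | ⟪ν, y - x⟫_ℝ = 0} ∩ ball x r) := by
    refine (le_infDist hne).2 fun p hp => ?_
    have hp_plane : ⟪ν, p - x⟫_ℝ = 0 := hp.1
    simpa [hp_plane] using abs_inner_sub_inner_le_dist hν y p x
  have hyF : y ∈ F ∩ ball x r := ⟨hy, hyx⟩
  exact hplane.trans <|
    (infDist_le_hausdorffDist_of_mem hyF (hausdorffEDist_inter_ball_ne_top hr hx)).trans h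

/-- The orthogonal projection of `w` onto the hyperplane lies in the ball, hence within `δ`
of `F`. -/
lemma infDist_le (h : IsFlatAt F x ν r δ) (hν : ‖ν‖ = 1) (hr : 0 < r) (hx : x ∈ F)
    {w : E} (hwx : dist w x < r) : infDist w F ≤ |⟪ν, w - x⟫_ℝ| + δ := by
  set t := ⟪ν, w - x⟫_ℝ with ht
  set q := w - t • ν
  have hqx : q - x = (w - x) - t • ν := by module
  have hq_plane : ⟪ν, q - x⟫_ℝ = 0 := by
    rw [hqx, inner_sub_right, real_inner_smul_right, real_inner_self_eq_norm_sq, hν]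
    ring
  have hq_norm : ‖q - x‖ ^ 2 = ‖w - x‖ ^ 2 - t ^ 2 := by
    rw [hqx, norm_sub_sq_real, real_inner_smul_right, real_inner_comm, ← ht, norm_smul, hν,
      Real.norm_eq_abs, mul_one, sq_abs]
    ring
  have hq_ball : q ∈ ball x r := by
    rw [mem_ball, dist_eq_norm]
    rw [dist_eq_norm] at hwx
    nlinarith [norm_nonneg (q - x), norm_nonneg (w - x), sq_nonneg t]
  have hwq : dist w q = |t| := by simp [q, norm_smul, hν]
  have hqF : infDist q F ≤ δ :=
    calc infDist q F ≤ infDist q (F ∩ ball x r) :=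
          infDist_le_infDist_of_subset inter_subset_left ⟨x, hx, mem_ball_self hr⟩
      _ ≤ hausdorffDist ({y | ⟪ν, y - x⟫_ℝ = 0} ∩ ball x r) (F ∩ ball x r) :=
          infDist_le_hausdorffDist_of_mem ⟨hq_plane, hq_ball⟩
            (by rw [hausdorffEDist_comm]; exact hausdorffEDist_inter_ball_ne_top hr hx)
      _ ≤ δ := by rw [hausdorffDist_comm]; exact h
  linarith [infDist_le_infDist_add_dist (x := w) (y := q) (s := F)]

/-- Points of `F` inside the ball are `δ`-close to the hyperplane, and the others are outside
the ball. -/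
lemma min_le_dist (h : IsFlatAt F x ν r δ) (hν : ‖ν‖ = 1) (hr : 0 < r) (hx : x ∈ F)
    (p : E) {y : E} (hy : y ∈ F) : min (⟪ν, p - x⟫_ℝ - δ) (r - dist p x) ≤ dist p y := by
  rcases lt_or_ge (dist y x) r with hyx | hyx
  · have hy_plane := abs_le.1 (h.abs_inner_le hν hr hx hy hyx)
    have hpy := abs_le.1 (abs_inner_sub_inner_le_dist hν p y x)
    exact (min_le_left _ _).trans (by linarith)
  · exact (min_le_right _ _).trans (by linarith [dist_triangle_left y x p, dist_comm p y])

end IsFlatAt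

/-- One step of the escape from the boundary: push `w` away from its nearest boundary point `x`
to `x + 3 • (w - x)`. Flatness at scale `6 d` keeps the boundary within `6 ε d` of a hyperplane
through `x`, which `w` is far above, so the segment never meets the boundary. -/
lemma exists_mem_connectedComponentIn_farther_of_isFlatAt {Ω : Set E} (hΩ : IsOpen Ω)
    {ε : ℝ} (hε : ε ≤ 1 / 20) {x w ν : E} (hν : ‖ν‖ = 1) (hx : x ∈ frontier Ω) (hw : w ∈ Ω)
    (hwx : infDist w (frontier Ω) = dist w x)
    (hflat : IsFlatAt (frontier Ω) x ν (6 * dist w x) (ε * (6 * dist w x))) :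
    ∃ w' ∈ connectedComponentIn Ω w, dist w' w ≤ 2 * dist w x ∧
      9 / 5 * dist w x ≤ infDist w' (frontier Ω) := by
  set d := dist w x
  have hd : 0 < d := dist_pos.2 fun h => (hΩ.frontier_eq ▸ hx).2 (h ▸ hw)
  have h6d : 0 < 6 * d := by positivity
  obtain ⟨ν, hν, hflat, hwν⟩ : ∃ ν : E, ‖ν‖ = 1 ∧
      IsFlatAt (frontier Ω) x ν (6 * d) (ε * (6 * d)) ∧ (1 - 6 * ε) * d ≤ ⟪ν, w - x⟫_ℝ := by
    have := hflat.infDist_le hν h6d hx (by linarith : dist w x < 6 * d)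
    rcases le_abs'.1 (by linarith : (1 - 6 * ε) * d ≤ |⟪ν, w - x⟫_ℝ|) with hneg | hpos
    · exact ⟨-ν, by rw [norm_neg, hν], hflat.neg, by rw [inner_neg_left]; linarith⟩
    · exact ⟨ν, hν, hflat, hpos⟩
  set ray : ℝ → E := fun τ => x + τ • (w - x)
  have hray : ∀ τ ∈ Icc (1 : ℝ) 3, (7 * τ - 3) / 10 * d ≤ infDist (ray τ) (frontier Ω) := by
    rintro τ ⟨hτ1, hτ3⟩
    have hinner : ⟪ν, ray τ - x⟫_ℝ = τ * ⟪ν, w - x⟫_ℝ := by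
      simp [ray, real_inner_smul_right]
    have hdist : dist (ray τ) x = τ * d := by
      simp [ray, dist_eq_norm, norm_smul, abs_of_pos (by linarith : (0 : ℝ) < τ), d]
    refine (le_infDist ⟨x, hx⟩).2 fun y hy => le_trans ?_ (hflat.min_le_dist hν h6d hx _ hy)
    rw [hinner, hdist]
    -- `τ ⟪ν, w - x⟫ - 6 ε d ≥ (τ - 6 ε (τ + 1)) d ≥ (7 τ - 3) / 10 * d` since `ε ≤ 1 / 20`
    have htw := mul_le_mul_of_nonneg_left hwν (by linarith : (0 : ℝ) ≤ τ)
    have hεd := mul_le_mul_of_nonneg_right hε (by positivity : 0 ≤ d * (τ + 1))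
    exact le_min (by nlinarith) (by nlinarith)
  have hray_Ω : ray '' Icc 1 3 ⊆ Ω := by
    refine (isPreconnected_Icc.image _ (by fun_prop)).subset_of_disjoint_frontier hΩ
      ⟨w, ⟨1, by norm_num, by simp [ray]⟩, hw⟩ ?_
    rw [Set.disjoint_left]
    rintro _ ⟨τ, hτ, rfl⟩ hF
    have := hray τ hτ
    rw [infDist_zero_of_mem hF] at this
    nlinarith [hτ.1]
  refine ⟨ray 3, (isPreconnected_Icc.image _ (by fun_prop)).subset_connectedComponentIn
    ⟨1, by norm_num, by simp [ray]⟩ hray_Ω ⟨3, by norm_num, rfl⟩, ?_, ?_⟩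
  · have : ray 3 - w = (2 : ℝ) • (w - x) := by simp only [ray]; module
    rw [dist_eq_norm, this, norm_smul, ← dist_eq_norm]
    norm_num [d]
  · linarith [hray 3 (by norm_num)]

/-- Condition (ii) of Reifenberg flatness at `z`, with unit normal `ν`. -/
def IsSeparatingNormal (Ω : Set E) (ε r₀ : ℝ) (z ν : E) : Prop :=
  ‖ν‖ = 1 ∧ IsFlatAt (frontier Ω) z ν r₀ (ε * r₀) ∧
    {y | 2 * ε * r₀ ≤ ⟪ν, y - z⟫_ℝ} ∩ ball z r₀ ⊆ Ω ∧
    {y | ⟪ν, y - z⟫_ℝ ≤ -(2 * ε * r₀)} ∩ ball z r₀ ⊆ Ωᶜ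

lemma convex_halfSpace_inner_sub_ge (ν z : E) (c : ℝ) : Convex ℝ {y | c ≤ ⟪ν, y - z⟫_ℝ} := by
  simpa only [inner_sub_right, le_sub_iff_add_le, innerₛₗ_apply_apply] using
    convex_halfSpace_ge (innerₛₗ ℝ ν).isLinear (c + ⟪ν, z⟫_ℝ)

/-- Both points lie in the upper half-ball, a convex subset of `Ω`: being far from `∂Ω`, `w` is
far from the hyperplane, and it is not in the lower half-ball, which misses `Ω`. -/
lemma IsSeparatingNormal.connectedComponentIn_eq {Ω : Set E} {ε r₀ : ℝ} {z ν : E}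
    (h : IsSeparatingNormal Ω ε r₀ z ν) (hz : z ∈ frontier Ω) (hr₀ : 0 < r₀) (hε : ε ≤ 1 / 4)
    {w : E} (hw : w ∈ Ω) (hwz : dist w z < r₀) (hd : 3 * ε * r₀ ≤ infDist w (frontier Ω)) :
    connectedComponentIn Ω w = connectedComponentIn Ω (z + (r₀ / 2) • ν) := by
  obtain ⟨hν, hflat, hup, hlo⟩ := h
  set S := {y | 2 * ε * r₀ ≤ ⟪ν, y - z⟫_ℝ} ∩ ball z r₀
  have hwS : w ∈ S := by
    refine ⟨?_, mem_ball.2 hwz⟩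
    have := hflat.infDist_le hν hr₀ hz hwz
    rcases le_abs'.1 (by linarith : 2 * ε * r₀ ≤ |⟪ν, w - z⟫_ℝ|) with hneg | hpos
    · exact absurd hw (hlo ⟨hneg, mem_ball.2 hwz⟩)
    · exact hpos
  have hpS : z + (r₀ / 2) • ν ∈ S := by
    refine ⟨?_, ?_⟩
    · simp only [mem_ofPred_eq, add_sub_cancel_left, real_inner_smul_right,
        real_inner_self_eq_norm_sq, hν]
      nlinarith
    · simp [norm_smul, hν, abs_of_pos hr₀, hr₀]
  have hS : IsPreconnected S :=
    ((convex_halfSpace_inner_sub_ge ν z _).inter (convex_ball z r₀)).isPreconnected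
  exact _root_.connectedComponentIn_eq (hS.subset_connectedComponentIn hwS hup hpS)

end InnerProductSpace

namespace IsReifenbergFlat

variable {N : ℕ} {ε r₀ : ℝ} {Ω : Set (EuclideanSpace ℝ (Fin N))}

lemma exists_mem_connectedComponentIn_farther (hΩ : IsReifenbergFlat ε r₀ Ω)
    (hε : ε ≤ 1 / 20) (hr₀ : 0 < r₀) (hfr : (frontier Ω).Nonempty) {w : EuclideanSpace ℝ (Fin N)}
    (hw : w ∈ Ω) (hd : infDist w (frontier Ω) < 3 * ε * r₀) :
    ∃ w' ∈ connectedComponentIn Ω w, dist w' w ≤ 2 * infDist w (frontier Ω) ∧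
      9 / 5 * infDist w (frontier Ω) ≤ infDist w' (frontier Ω) := by
  obtain ⟨x, hx, hwx⟩ := isClosed_frontier.exists_infDist_eq_dist hfr w
  have hxw : 0 < dist w x := dist_pos.2 fun h => (hΩ.2.1.frontier_eq ▸ hx).2 (h ▸ hw)
  have hεr₀ := mul_le_mul_of_nonneg_right hε hr₀.le
  obtain ⟨ν, hν, hflat⟩ := hΩ.2.2.1 x hx (6 * dist w x) (by positivity) (by linarith)
  rw [hwx]
  exact exists_mem_connectedComponentIn_farther_of_isFlatAt hΩ.2.1 hε hν hx hw hwx hflat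

/-- Each escape step multiplies the distance to `∂Ω` by at least `9 / 5` and moves by at most
twice that distance, so `dist w z - 5 / 2 * infDist w (frontier Ω)` does not increase; after
`n` steps the distance to `∂Ω` reaches `3 ε r₀`. -/
lemma connectedComponentIn_eq_of_le_pow_mul (hΩ : IsReifenbergFlat ε r₀ Ω) (hε : ε ≤ 1 / 20)
    (hr₀ : 0 < r₀) {z ν : EuclideanSpace ℝ (Fin N)} (hz : z ∈ frontier Ω)
    (hν : IsSeparatingNormal Ω ε r₀ z ν) (n : ℕ) {w : EuclideanSpace ℝ (Fin N)} (hw : w ∈ Ω)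
    (hd : infDist w (frontier Ω) < 3 * ε * r₀)
    (hn : 3 * ε * r₀ ≤ (9 / 5) ^ n * infDist w (frontier Ω))
    (hwz : dist w z ≤ r₀ / 4 + 5 / 2 * infDist w (frontier Ω)) :
    connectedComponentIn Ω w = connectedComponentIn Ω (z + (r₀ / 2) • ν) := by
  induction n generalizing w with
  | zero => linarith [pow_zero (9 / 5 : ℝ)]
  | succ n ih =>
    obtain ⟨w', hw', hww', hgrow⟩ := hΩ.exists_mem_connectedComponentIn_farther hε hr₀ ⟨z, hz⟩ hw hd
    rw [connectedComponentIn_eq hw']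
    have hw'z := dist_triangle w' w z
    have hεr₀ := mul_le_mul_of_nonneg_right hε hr₀.le
    rcases le_or_gt (3 * ε * r₀) (infDist w' (frontier Ω)) with hd' | hd'
    · exact hν.connectedComponentIn_eq hz hr₀ (by linarith)
        (connectedComponentIn_subset _ _ hw') (by linarith) hd'
    · refine ih (connectedComponentIn_subset _ _ hw') hd' ?_ (by linarith)
      calc 3 * ε * r₀ ≤ (9 / 5) ^ n * (9 / 5 * infDist w (frontier Ω)) := by
            rw [← mul_assoc, ← pow_succ]; exact hn
        _ ≤ (9 / 5) ^ n * infDist w' (frontier Ω) := by gcongr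

lemma connectedComponentIn_eq_of_dist_lt (hΩ : IsReifenbergFlat ε r₀ Ω) (hε : ε ≤ 1 / 20)
    (hr₀ : 0 < r₀) {z ν : EuclideanSpace ℝ (Fin N)} (hz : z ∈ frontier Ω)
    (hν : IsSeparatingNormal Ω ε r₀ z ν) {w : EuclideanSpace ℝ (Fin N)} (hw : w ∈ Ω)
    (hwz : dist w z < r₀ / 4) :
    connectedComponentIn Ω w = connectedComponentIn Ω (z + (r₀ / 2) • ν) := by
  rcases le_or_gt (3 * ε * r₀) (infDist w (frontier Ω)) with hd | hd
  · exact hν.connectedComponentIn_eq hz hr₀ (by linarith) hw (by linarith) hd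
  have hw_pos : 0 < infDist w (frontier Ω) :=
    (isClosed_frontier.notMem_iff_infDist_pos ⟨z, hz⟩).1 fun hwF =>
      (hΩ.2.1.frontier_eq ▸ hwF).2 hw
  obtain ⟨n, hn⟩ := pow_unbounded_of_one_lt (3 * ε * r₀ / infDist w (frontier Ω))
    (by norm_num : (1 : ℝ) < 9 / 5)
  rw [div_lt_iff₀ hw_pos] at hn
  exact hΩ.connectedComponentIn_eq_of_le_pow_mul hε hr₀ hz hν n hw hd hn.le (by linarith)

lemma connectedComponentIn_eq_of_mem_ball (hΩ : IsReifenbergFlat ε r₀ Ω) (hε : ε ≤ 1 / 20)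
    (hr₀ : 0 < r₀) {z : EuclideanSpace ℝ (Fin N)} (hz : z ∈ frontier Ω)
    {w₁ w₂ : EuclideanSpace ℝ (Fin N)} (hw₁ : w₁ ∈ Ω ∩ ball z (r₀ / 4))
    (hw₂ : w₂ ∈ Ω ∩ ball z (r₀ / 4)) :
    connectedComponentIn Ω w₁ = connectedComponentIn Ω w₂ := by
  obtain ⟨ν, hν⟩ : ∃ ν, IsSeparatingNormal Ω ε r₀ z ν := hΩ.2.2.2 z hz
  rw [hΩ.connectedComponentIn_eq_of_dist_lt hε hr₀ hz hν hw₁.1 hw₁.2,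
    hΩ.connectedComponentIn_eq_of_dist_lt hε hr₀ hz hν hw₂.1 hw₂.2]

end IsReifenbergFlat

theorem components_are_separated_general {N : ℕ} {ε r₀ : ℝ}
    (hε' : ε ≤ 1 / 20 ^ N) (hr₀ : 0 < r₀)
    {Ω : Set (EuclideanSpace ℝ (Fin N))} (hΩ : IsReifenbergFlat ε r₀ Ω)
    {x y : EuclideanSpace ℝ (Fin N)} (hy : y ∈ Ω)
    (hne : connectedComponentIn Ω x ≠ connectedComponentIn Ω y) :
    ∀ z ∈ frontier (connectedComponentIn Ω x),
      r₀ / 70 < Metric.infDist z (connectedComponentIn Ω y) := by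
  intro z hz
  obtain rfl | hN := Nat.eq_zero_or_pos N
  · exact absurd (congrArg _ (Subsingleton.elim x y)) hne
  have hε : ε ≤ 1 / 20 :=
    hε'.trans (one_div_le_one_div_of_le (by norm_num) (le_self_pow₀ (by norm_num) hN.ne'))
  have hzΩ := hΩ.2.1.frontier_connectedComponentIn_subset x hz
  by_contra! hzy
  obtain ⟨wy, hwy, hwyz⟩ := (infDist_lt_iff ⟨y, mem_connectedComponentIn hy⟩).1
    (hzy.trans_lt (by linarith : r₀ / 70 < r₀ / 4))
  obtain ⟨wx, hwxz, hwx⟩ :=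
    _root_.mem_closure_iff.1 hz.1 _ isOpen_ball (mem_ball_self (by positivity : 0 < r₀ / 4))
  refine hne ?_
  rw [connectedComponentIn_eq hwx, connectedComponentIn_eq hwy]
  exact hΩ.connectedComponentIn_eq_of_mem_ball hε hr₀ hzΩ
    ⟨connectedComponentIn_subset _ _ hwx, hwxz⟩
    ⟨connectedComponentIn_subset _ _ hwy, mem_ball'.2 hwyz⟩

/-- **Proposition (separation of distinct connected components).**
Let `Ω ⊆ ℝ^N` be a bounded `(ε, r₀)`-Reifenberg-flat domain with `ε ≤ 20^{-N}` and let
`U_i`, `U_j` be two distinct connected components of `Ω`. Then for every `z ∈ ∂U_i` one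
has `d(z, U_j) > r₀ / 70`. -/
theorem components_are_separated {N : ℕ} {ε r₀ : ℝ}
    (hε : 0 < ε) (hε2 : ε < 1 / 2) (hε' : ε ≤ 1 / 20 ^ N) (hr₀ : 0 < r₀)
    {Ω : Set (EuclideanSpace ℝ (Fin N))} (hΩ : IsReifenbergFlat ε r₀ Ω)
    (hbdd : Bornology.IsBounded Ω)
    {x y : EuclideanSpace ℝ (Fin N)} (hx : x ∈ Ω) (hy : y ∈ Ω)
    (hne : connectedComponentIn Ω x ≠ connectedComponentIn Ω y) :
    ∀ z ∈ frontier (connectedComponentIn Ω x),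
      r₀ / 70 < Metric.infDist z (connectedComponentIn Ω y) :=
  components_are_separated_general hε' hr₀ hΩ hy hne
end
end

section
/- Let X and Y be two (ε, r₀)-Reifenberg-flat domains in ℝ^N satisfying d_H(∂X, ∂Y) ≤ 2r₀. Then d_H(∂X, ∂Y) ≤ (4/(1−2ε)) · min{d_H(X, Y), d_H(ℝ^N∖X, ℝ^N∖Y)}. -/
/-! Fix `x ∈ ∂X` and let `d` be its distance to `∂Y`, so that `ball x d` lies entirely in `Y` or
entirely in `Yᶜ`. Condition (ii) at scale `r₀` propagates to every scale `σ ≤ r₀`: going down by a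
factor at most `5/4`, the new normal (suitably oriented) is close enough to the old one that the
caps beyond the two slabs overlap, so each new cap inherits its side from an old one. At scale
`σ = min d r₀ ≥ d / 2`, the ball `B(x, σ)` therefore contains a ball of radius `(1 - ε) σ / 2`
inside `X` and one inside `Xᶜ`. If `ball x d ⊆ Y`, the ball inside `Xᶜ` yields a point of `Y`
far from `X`, while `x ∈ closure Xᶜ` is at distance `d` from `Yᶜ`; the case `ball x d ⊆ Yᶜ` is
symmetric. Both distances are at least `(1 - 2ε) d / 4`. -/

open Metric MeasureTheory Set Filter
open scoped ENNReal InnerProductSpace NNReal Topology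

noncomputable section

theorem IsPreconnected.subset_of_disjoint_frontier_s15 {α : Type*} [TopologicalSpace α]
    {s t : Set α} (hs : IsPreconnected s) (hst : Disjoint s (frontier t))
    (hne : (s ∩ t).Nonempty) : s ⊆ t := by
  have hint : closure t ∩ s ⊆ interior t := fun y ⟨hyc, hys⟩ =>
    by_contra fun hyi => disjoint_left.1 hst hys ⟨hyc, hyi⟩
  obtain ⟨z, hzs, hzt⟩ := hne
  refine (hs.subset_of_closure_inter_subset isOpen_interior
    ⟨z, hzs, hint ⟨subset_closure hzt, hzs⟩⟩ fun y hy => ?_).trans interior_subset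
  exact hint ⟨closure_mono interior_subset hy.1, hy.2⟩

section Metric

variable {α : Type*} [PseudoMetricSpace α]

theorem Metric.ofReal_le_infEDist_of_ball_subset_compl {x : α} {s : Set α} {r : ℝ}
    (h : ball x r ⊆ sᶜ) : ENNReal.ofReal r ≤ infEDist x s :=
  le_infEDist.2 fun y hy => by
    rw [edist_dist]
    exact ENNReal.ofReal_le_ofReal (not_lt.1 fun hlt => h (mem_ball'.2 hlt) hy)

theorem Metric.ofReal_le_min_hausdorffEDist {S T : Set α} {x z : α} {d ρ : ℝ}
    (hx : x ∈ closure Sᶜ) (hT : ball x d ⊆ T) (hz : z ∈ ball x d) (hzS : ball z ρ ⊆ Sᶜ)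
    (hρd : ρ ≤ d) : ENNReal.ofReal ρ ≤ min (hausdorffEDist S T) (hausdorffEDist Sᶜ Tᶜ) := by
  refine le_min ?_ ?_
  · calc ENNReal.ofReal ρ ≤ infEDist z S := ofReal_le_infEDist_of_ball_subset_compl hzS
      _ ≤ hausdorffEDist T S := infEDist_le_hausdorffEDist_of_mem (hT hz)
      _ = hausdorffEDist S T := hausdorffEDist_comm
  · calc ENNReal.ofReal ρ ≤ ENNReal.ofReal d := ENNReal.ofReal_le_ofReal hρd
      _ ≤ infEDist x Tᶜ := ofReal_le_infEDist_of_ball_subset_compl (by rwa [compl_compl])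
      _ ≤ hausdorffEDist (closure Sᶜ) Tᶜ := infEDist_le_hausdorffEDist_of_mem hx
      _ = hausdorffEDist Sᶜ Tᶜ := hausdorffEDist_closure_left

end Metric

namespace Reifenberg

section InnerProductSpace

variable {E : Type*} [NormedAddCommGroup E] [InnerProductSpace ℝ E]

def cap (ν w : E) (c σ : ℝ) : Set E := {y | c < ⟪ν, y - w⟫_ℝ} ∩ ball w σ

theorem convex_cap (ν w : E) (c σ : ℝ) : Convex ℝ (cap ν w c σ) := by
  have h : {y : E | c < ⟪ν, y - w⟫_ℝ} = {y | c + ⟪ν, w⟫_ℝ < innerₛₗ ℝ ν y} := by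
    ext y
    simp only [mem_ofPred_eq, coe_innerₛₗ_apply, inner_sub_right, lt_sub_iff_add_lt]
  unfold cap
  rw [h]
  exact (convex_halfSpace_gt (innerₛₗ ℝ ν).isLinear _).inter (convex_ball w σ)

theorem cap_mono {ν w : E} {c c' σ σ' : ℝ} (hc : c' ≤ c) (hσ : σ ≤ σ') :
    cap ν w c σ ⊆ cap ν w c' σ' :=
  inter_subset_inter (fun _ hy => hc.trans_lt hy) (ball_subset_ball hσ)

theorem add_smul_mem_cap {ν u : E} (w : E) {c t σ : ℝ} (hc : c < t * ⟪ν, u⟫_ℝ)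
    (ht : |t| * ‖u‖ < σ) : w + t • u ∈ cap ν w c σ := by
  refine ⟨?_, ?_⟩
  · rwa [mem_ofPred_eq, add_sub_cancel_left, real_inner_smul_right]
  · rwa [mem_ball, dist_self_add_left, norm_smul, Real.norm_eq_abs]

theorem ball_subset_cap {ν : E} (hν : ‖ν‖ = 1) (w : E) {t : ℝ} (ht : 0 ≤ t) (r : ℝ) :
    ball (w + t • ν) r ⊆ cap ν w (t - r) (t + r) := by
  intro y hy
  rw [mem_ball, dist_eq_norm] at hy
  have hinner : ⟪ν, y - w⟫_ℝ = t + ⟪ν, y - (w + t • ν)⟫_ℝ := by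
    rw [inner_sub_right, inner_sub_right, inner_add_right, real_inner_smul_right,
      real_inner_self_eq_norm_sq, hν]
    ring
  have hcs := abs_real_inner_le_norm ν (y - (w + t • ν))
  rw [hν, one_mul] at hcs
  refine ⟨?_, ?_⟩
  · rw [mem_ofPred_eq, hinner]
    linarith [neg_abs_le ⟪ν, y - (w + t • ν)⟫_ℝ]
  · calc dist y w ≤ dist y (w + t • ν) + dist (w + t • ν) w := dist_triangle _ _ _
      _ < r + t := by
        rw [dist_eq_norm, dist_self_add_left, norm_smul, hν, mul_one, Real.norm_eq_abs,
          abs_of_nonneg ht]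
        linarith
      _ = t + r := add_comm r t

theorem cap_inter_cap_nonempty {ν μ : E} (hν : ‖ν‖ = 1) (hμ : ‖μ‖ = 1) (hνμ : 0 ≤ ⟪ν, μ⟫_ℝ)
    (w : E) {c s : ℝ} (hs : 0 < s) (hc : c ≤ 5 / 8 * s) :
    (cap ν w c s ∩ cap μ w c s).Nonempty := by
  set n := ‖ν + μ‖
  have hn2 : n ^ 2 = 2 + 2 * ⟪ν, μ⟫_ℝ := by
    rw [norm_add_sq_real, hν, hμ]
    ring
  have hn : 7 / 5 ≤ n := by nlinarith [norm_nonneg (ν + μ)]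
  have hνs : ⟪ν, ν + μ⟫_ℝ = n ^ 2 / 2 := by
    rw [inner_add_right, real_inner_self_eq_norm_sq, hν, hn2]
    ring
  have hμs : ⟪μ, ν + μ⟫_ℝ = n ^ 2 / 2 := by
    rw [inner_add_right, real_inner_self_eq_norm_sq, hμ, real_inner_comm, hn2]
    ring
  -- the point at distance `15 s / 16` from `w` along the bisector of `ν` and `μ`
  have ht : |15 / 16 * s / n| * n = 15 / 16 * s := by
    rw [abs_of_pos (by positivity)]
    field_simp
  have hheight : c < 15 / 16 * s / n * (n ^ 2 / 2) := by
    have : 15 / 16 * s / n * (n ^ 2 / 2) = 15 / 32 * s * n := by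
      field_simp
      ring
    nlinarith
  exact ⟨w + (15 / 16 * s / n) • (ν + μ), add_smul_mem_cap w (by rwa [hνs]) (by linarith),
    add_smul_mem_cap w (by rwa [hμs]) (by linarith)⟩

theorem disjoint_cap_frontier {ν w : E} {X : Set E} {δ σ : ℝ}
    (hslab : ∀ a ∈ frontier X ∩ ball w σ, |⟪ν, a - w⟫_ℝ| ≤ δ) :
    Disjoint (cap ν w δ σ) (frontier X) :=
  disjoint_left.2 fun y hy hyX =>
    (hslab y ⟨hyX, hy.2⟩).not_gt (hy.1.trans_le (le_abs_self _))

theorem cap_subset_of_mem {ν w z : E} {X : Set E} {δ σ : ℝ}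
    (hslab : ∀ a ∈ frontier X ∩ ball w σ, |⟪ν, a - w⟫_ℝ| ≤ δ)
    (hz : z ∈ cap ν w δ σ) (hzX : z ∈ X) : cap ν w δ σ ⊆ X :=
  (convex_cap ν w δ σ).isPreconnected.subset_of_disjoint_frontier_s15
    (disjoint_cap_frontier hslab) ⟨z, hz, hzX⟩

theorem cap_subset_of_cap_subset {X : Set E} {ν μ w : E} {ε σ σ' : ℝ}
    (hν : ‖ν‖ = 1) (hμ : ‖μ‖ = 1) (hνμ : 0 ≤ ⟪ν, μ⟫_ℝ) (hε : 0 ≤ ε) (hε2 : ε < 1 / 2)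
    (hσ' : 0 < σ') (hσ'σ : σ' ≤ σ) (hσσ' : σ ≤ 5 / 4 * σ')
    (hX : cap ν w (ε * σ) σ ⊆ X)
    (hslab : ∀ a ∈ frontier X ∩ ball w σ', |⟪μ, a - w⟫_ℝ| ≤ ε * σ') :
    cap μ w (ε * σ') σ' ⊆ X := by
  obtain ⟨z, hzν, hzμ⟩ := cap_inter_cap_nonempty hν hμ hνμ w hσ' (c := ε * σ) (by nlinarith)
  exact cap_subset_of_mem hslab (cap_mono (by nlinarith) le_rfl hzμ)
    (hX (cap_mono le_rfl hσ'σ hzν))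

theorem abs_inner_sub_le_of_hausdorffDist_le {F : Set E} {ν w a : E} {δ σ : ℝ}
    (hν : ‖ν‖ = 1) (hσ : 0 < σ) (hw : w ∈ F)
    (hF : hausdorffDist (F ∩ ball w σ) ({y | ⟪ν, y - w⟫_ℝ = 0} ∩ ball w σ) ≤ δ)
    (ha : a ∈ F ∩ ball w σ) : |⟪ν, a - w⟫_ℝ| ≤ δ := by
  set P := {y | ⟪ν, y - w⟫_ℝ = 0} ∩ ball w σ
  have hP : P.Nonempty := ⟨w, by simp [P, hσ]⟩
  have hfin : hausdorffEDist (F ∩ ball w σ) P ≠ ⊤ :=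
    hausdorffEDist_ne_top_of_nonempty_of_bounded ⟨w, hw, mem_ball_self hσ⟩ hP
      (isBounded_ball.subset inter_subset_right) (isBounded_ball.subset inter_subset_right)
  refine le_trans ?_ ((infDist_le_hausdorffDist_of_mem ha hfin).trans hF)
  refine (le_infDist hP).2 fun p hp => ?_
  have hsplit : ⟪ν, a - w⟫_ℝ = ⟪ν, a - p⟫_ℝ := by
    rw [← sub_add_sub_cancel a p w, inner_add_right, hp.1, add_zero]
  calc |⟪ν, a - w⟫_ℝ| ≤ ‖ν‖ * ‖a - p‖ := hsplit ▸ abs_real_inner_le_norm ν (a - p)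
    _ = dist a p := by rw [hν, one_mul, dist_eq_norm]

theorem slab_neg_compl {X : Set E} {ν w : E} {δ σ : ℝ}
    (h : ∀ a ∈ frontier X ∩ ball w σ, |⟪ν, a - w⟫_ℝ| ≤ δ) :
    ∀ a ∈ frontier Xᶜ ∩ ball w σ, |⟪-ν, a - w⟫_ℝ| ≤ δ := by
  simpa only [frontier_compl, inner_neg_left, abs_neg] using h

-- Condition (ii) of Reifenberg flatness at scale `σ`, with the slab narrowed to width `ε σ`.
def IsFlatSeparatedAt (ε : ℝ) (X : Set E) (w : E) (σ : ℝ) : Prop :=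
  ∃ ν : E, ‖ν‖ = 1 ∧ (∀ a ∈ frontier X ∩ ball w σ, |⟪ν, a - w⟫_ℝ| ≤ ε * σ) ∧
    cap ν w (ε * σ) σ ⊆ X ∧ cap (-ν) w (ε * σ) σ ⊆ Xᶜ

variable {ε σ : ℝ} {X : Set E} {w : E}

theorem IsFlatSeparatedAt.compl (h : IsFlatSeparatedAt ε X w σ) :
    IsFlatSeparatedAt ε Xᶜ w σ := by
  obtain ⟨ν, hν, hslab, hup, hdown⟩ := h
  exact ⟨-ν, by rwa [norm_neg], slab_neg_compl hslab, hdown, by rwa [neg_neg, compl_compl]⟩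

theorem IsFlatSeparatedAt.exists_ball_subset (h : IsFlatSeparatedAt ε X w σ) (hε : 0 ≤ ε)
    (hε1 : ε < 1) (hσ : 0 < σ) : ∃ z ∈ ball w σ, ball z ((1 - ε) / 2 * σ) ⊆ X := by
  obtain ⟨ν, hν, -, hup, -⟩ := h
  have ht : 0 ≤ (1 + ε) / 2 * σ := by positivity
  refine ⟨w + ((1 + ε) / 2 * σ) • ν, ?_, ?_⟩
  · rw [mem_ball, dist_self_add_left, norm_smul, hν, mul_one, Real.norm_eq_abs,
      abs_of_nonneg ht]
    nlinarith
  · exact (ball_subset_cap hν w ht _).trans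
      ((cap_mono (le_of_eq (by ring)) (le_of_eq (by ring))).trans hup)

theorem IsFlatSeparatedAt.of_slab {σ' : ℝ} (h : IsFlatSeparatedAt ε X w σ) {ν' : E}
    (hν' : ‖ν'‖ = 1) (hslab : ∀ a ∈ frontier X ∩ ball w σ', |⟪ν', a - w⟫_ℝ| ≤ ε * σ')
    (hε : 0 ≤ ε) (hε2 : ε < 1 / 2) (hσ' : 0 < σ') (hσ'σ : σ' ≤ σ) (hσσ' : σ ≤ 5 / 4 * σ') :
    IsFlatSeparatedAt ε X w σ' := by
  obtain ⟨ν, hν, -, hup, hdown⟩ := h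
  obtain ⟨μ, hμ, hνμ, hslabμ⟩ : ∃ μ : E, ‖μ‖ = 1 ∧ 0 ≤ ⟪ν, μ⟫_ℝ ∧
      ∀ a ∈ frontier X ∩ ball w σ', |⟪μ, a - w⟫_ℝ| ≤ ε * σ' := by
    rcases le_total 0 ⟪ν, ν'⟫_ℝ with hpos | hneg
    · exact ⟨ν', hν', hpos, hslab⟩
    · refine ⟨-ν', by rwa [norm_neg], by rwa [inner_neg_right, neg_nonneg], ?_⟩
      simpa only [inner_neg_left, abs_neg] using hslab
  exact ⟨μ, hμ, hslabμ,
    cap_subset_of_cap_subset hν hμ hνμ hε hε2 hσ' hσ'σ hσσ' hup hslabμ,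
    cap_subset_of_cap_subset (by rwa [norm_neg]) (by rwa [norm_neg]) (by rwa [inner_neg_neg])
      hε hε2 hσ' hσ'σ hσσ' hdown (slab_neg_compl hslabμ)⟩

end InnerProductSpace

end Reifenberg

namespace IsReifenbergFlat

open Reifenberg

variable {N : ℕ} {ε r₀ : ℝ} {X : Set (EuclideanSpace ℝ (Fin N))} {x : EuclideanSpace ℝ (Fin N)}

theorem exists_slab (hX : IsReifenbergFlat ε r₀ X) (hx : x ∈ frontier X)
    {σ : ℝ} (hσ : 0 < σ) (hσr₀ : σ ≤ r₀) : ∃ ν : EuclideanSpace ℝ (Fin N), ‖ν‖ = 1 ∧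
      ∀ a ∈ frontier X ∩ ball x σ, |⟪ν, a - x⟫_ℝ| ≤ ε * σ := by
  obtain ⟨ν, hν, hF⟩ := hX.2.2.1 x hx σ hσ hσr₀
  exact ⟨ν, hν, fun a ha => abs_inner_sub_le_of_hausdorffDist_le hν hσ hx hF ha⟩

theorem isFlatSeparatedAt_r₀ (hX : IsReifenbergFlat ε r₀ X) (hε : 0 ≤ ε)
    (hε2 : ε < 1 / 2) (hr₀ : 0 < r₀) (hx : x ∈ frontier X) : IsFlatSeparatedAt ε X x r₀ := by
  obtain ⟨ν, hν, hF, hup, hdown⟩ := hX.2.2.2 x hx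
  have hslab : ∀ a ∈ frontier X ∩ ball x r₀, |⟪ν, a - x⟫_ℝ| ≤ ε * r₀ :=
    fun a ha => abs_inner_sub_le_of_hausdorffDist_le hν hr₀ hx hF ha
  have hmem : ∀ μ : EuclideanSpace ℝ (Fin N), ‖μ‖ = 1 →
      x + ((1 / 2 + ε) * r₀) • μ ∈ cap μ x (2 * ε * r₀) r₀ := fun μ hμ =>
    add_smul_mem_cap x (by rw [real_inner_self_eq_norm_sq, hμ]; nlinarith)
      (by rw [hμ, abs_of_pos (by positivity)]; nlinarith)
  have hupcap : cap ν x (2 * ε * r₀) r₀ ⊆ X := fun y ⟨hy, hyb⟩ =>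
    hup ⟨le_of_lt (mem_ofPred_eq ▸ hy), hyb⟩
  have hdowncap : cap (-ν) x (2 * ε * r₀) r₀ ⊆ Xᶜ := fun y ⟨hy, hyb⟩ =>
    hdown ⟨show ⟪ν, y - x⟫_ℝ ≤ -(2 * ε * r₀) by
      linarith [inner_neg_left (𝕜 := ℝ) ν (y - x), mem_ofPred_eq ▸ hy], hyb⟩
  have hcap : ∀ μ : EuclideanSpace ℝ (Fin N), cap μ x (2 * ε * r₀) r₀ ⊆ cap μ x (ε * r₀) r₀ :=
    fun μ => cap_mono (by nlinarith) le_rfl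
  have hν' : ‖-ν‖ = 1 := by rwa [norm_neg]
  exact ⟨ν, hν, hslab, cap_subset_of_mem hslab (hcap ν (hmem ν hν)) (hupcap (hmem ν hν)),
    cap_subset_of_mem (slab_neg_compl hslab) (hcap (-ν) (hmem (-ν) hν'))
      (hdowncap (hmem (-ν) hν'))⟩

theorem isFlatSeparatedAt (hX : IsReifenbergFlat ε r₀ X) (hε : 0 ≤ ε)
    (hε2 : ε < 1 / 2) (hr₀ : 0 < r₀) (hx : x ∈ frontier X) {σ : ℝ} (hσ : 0 < σ)
    (hσr₀ : σ ≤ r₀) : IsFlatSeparatedAt ε X x σ := by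
  -- descend from scale `r₀` in steps of ratio at most `5/4`
  suffices key : ∀ n : ℕ, ∀ σ, 0 < σ → σ ≤ r₀ → (4 / 5) ^ n * r₀ ≤ σ →
      IsFlatSeparatedAt ε X x σ by
    obtain ⟨n, hn⟩ := exists_pow_lt_of_lt_one (div_pos hσ hr₀) (by norm_num : (4 / 5 : ℝ) < 1)
    exact key n σ hσ hσr₀ ((lt_div_iff₀ hr₀).1 hn).le
  intro n
  induction n with
  | zero =>
    intro σ _ hσr₀ hle
    rw [le_antisymm hσr₀ (by simpa using hle)]
    exact hX.isFlatSeparatedAt_r₀ hε hε2 hr₀ hx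
  | succ n ih =>
    intro σ hσ hσr₀ hle
    obtain ⟨ν, hν, hslab⟩ := hX.exists_slab hx hσ hσr₀
    have hpow : (4 / 5 : ℝ) ^ n ≤ 1 := pow_le_one₀ (by norm_num) (by norm_num)
    have hup : (4 / 5) ^ n * r₀ ≤ min (5 / 4 * σ) r₀ :=
      le_min (by rw [pow_succ] at hle; linarith) (by nlinarith)
    exact (ih _ (lt_min (by linarith) hr₀) (min_le_right _ _) hup).of_slab hν hslab hε hε2 hσ
      (le_min (by linarith) hσr₀) (min_le_left _ _)

theorem ofReal_le_min_hausdorffEDist (hX : IsReifenbergFlat ε r₀ X)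
    (hε : 0 ≤ ε) (hε2 : ε < 1 / 2) (hr₀ : 0 < r₀) (hx : x ∈ frontier X)
    {Y : Set (EuclideanSpace ℝ (Fin N))} {d : ℝ} (hd : 0 < d) (hdr₀ : d ≤ 2 * r₀)
    (hY : Disjoint (ball x d) (frontier Y)) :
    ENNReal.ofReal ((1 - 2 * ε) / 4 * d) ≤ min (hausdorffEDist X Y) (hausdorffEDist Xᶜ Yᶜ) := by
  have hσ : 0 < min d r₀ := lt_min hd hr₀
  have hsep := hX.isFlatSeparatedAt hε hε2 hr₀ hx hσ (min_le_right _ _)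
  have hρ : (1 - 2 * ε) / 4 * d ≤ (1 - ε) / 2 * min d r₀ := by
    have : d / 2 ≤ min d r₀ := le_min (by linarith) (by linarith)
    nlinarith
  have hρd : (1 - ε) / 2 * min d r₀ ≤ d := by nlinarith [min_le_left d r₀]
  refine (ENNReal.ofReal_le_ofReal hρ).trans ?_
  by_cases hYx : (ball x d ∩ Y).Nonempty
  · have hball : ball x d ⊆ Y :=
      (convex_ball x d).isPreconnected.subset_of_disjoint_frontier_s15 hY hYx
    obtain ⟨z, hz, hzX⟩ := hsep.compl.exists_ball_subset hε (by linarith) hσ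
    exact Metric.ofReal_le_min_hausdorffEDist
      (frontier_subset_closure (by rwa [frontier_compl])) hball
      (ball_subset_ball (min_le_left _ _) hz) hzX hρd
  · have hball : ball x d ⊆ Yᶜ := fun y hy hyY => hYx ⟨y, hy, hyY⟩
    obtain ⟨z, hz, hzX⟩ := hsep.exists_ball_subset hε (by linarith) hσ
    have := Metric.ofReal_le_min_hausdorffEDist (S := Xᶜ)
      (by rw [compl_compl]; exact frontier_subset_closure hx) hball
      (ball_subset_ball (min_le_left _ _) hz) (by rwa [compl_compl]) hρd
    rwa [compl_compl, compl_compl, min_comm (hausdorffEDist _ _)] at this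

theorem infEDist_frontier_le (hX : IsReifenbergFlat ε r₀ X) (hε : 0 ≤ ε) (hε2 : ε < 1 / 2)
    (hr₀ : 0 < r₀) (hx : x ∈ frontier X) {Y : Set (EuclideanSpace ℝ (Fin N))}
    (hxY : infEDist x (frontier Y) ≤ ENNReal.ofReal (2 * r₀)) :
    infEDist x (frontier Y) ≤
      ENNReal.ofReal (4 / (1 - 2 * ε)) * min (hausdorffEDist X Y) (hausdorffEDist Xᶜ Yᶜ) := by
  set D := infEDist x (frontier Y)
  have hDtop : D ≠ ⊤ := ne_top_of_le_ne_top ENNReal.ofReal_ne_top hxY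
  rcases eq_or_ne D 0 with hD0 | hD0
  · rw [hD0]
    exact zero_le
  have hdisj : Disjoint (ball x D.toReal) (frontier Y) := disjoint_left.2 fun y hy hyY => by
    have hDy : D ≤ ENNReal.ofReal (dist x y) := edist_dist x y ▸ infEDist_le_edist_of_mem hyY
    exact (mem_ball'.1 hy).not_ge (ENNReal.toReal_le_of_le_ofReal dist_nonneg hDy)
  have key := hX.ofReal_le_min_hausdorffEDist hε hε2 hr₀ hx
    (ENNReal.toReal_pos hD0 hDtop) (ENNReal.toReal_le_of_le_ofReal (by positivity) hxY) hdisj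
  have hK : 4 / (1 - 2 * ε) * ((1 - 2 * ε) / 4 * D.toReal) = D.toReal := by
    field_simp [show 1 - 2 * ε ≠ 0 by linarith]
  calc D = ENNReal.ofReal D.toReal := (ENNReal.ofReal_toReal hDtop).symm
    _ = ENNReal.ofReal (4 / (1 - 2 * ε)) * ENNReal.ofReal ((1 - 2 * ε) / 4 * D.toReal) := by
      rw [← ENNReal.ofReal_mul (div_nonneg (by norm_num) (by linarith)), hK]
    _ ≤ _ := by gcongr

end IsReifenbergFlat

/-- **Lemma (the boundary distance is controlled by the distances of the domains and of
their complements).** Let `X`, `Y` be `(ε, r₀)`-Reifenberg-flat domains of `ℝ^N` with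
`d_H(∂X, ∂Y) ≤ 2 r₀`. Then
`d_H(∂X, ∂Y) ≤ (4 / (1 - 2ε)) * min (d_H(X,Y)) (d_H(Xᶜ, Yᶜ))`. -/
theorem hausdorff_boundary_control {N : ℕ} {ε r₀ : ℝ}
    (hε : 0 < ε) (hε2 : ε < 1 / 2) (hr₀ : 0 < r₀)
    {X Y : Set (EuclideanSpace ℝ (Fin N))}
    (hX : IsReifenbergFlat ε r₀ X) (hY : IsReifenbergFlat ε r₀ Y)
    (hclose : EMetric.hausdorffEdist (frontier X) (frontier Y) ≤ ENNReal.ofReal (2 * r₀)) :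
    EMetric.hausdorffEdist (frontier X) (frontier Y) ≤
      ENNReal.ofReal (4 / (1 - 2 * ε)) *
        min (EMetric.hausdorffEdist X Y) (EMetric.hausdorffEdist Xᶜ Yᶜ) := by
  refine hausdorffEDist_le_of_infEDist (fun x hx => ?_) (fun y hy => ?_)
  · exact hX.infEDist_frontier_le hε.le hε2 hr₀ hx
      ((infEDist_le_hausdorffEDist_of_mem hx).trans hclose)
  · have := hY.infEDist_frontier_le hε.le hε2 hr₀ hy
      ((infEDist_le_hausdorffEDist_of_mem hy).trans (hausdorffEDist_comm.trans_le hclose))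
    rwa [hausdorffEDist_comm, hausdorffEDist_comm (s := Yᶜ)] at this
end
end
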